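/- Let N ≥ 1, s ∈ (0,1), p ∈ (1,∞), and let u : ℝ^N → ℝ be bounded with bounded Lipschitz gradient (u ∈ C^{1,1}(ℝ^N)). Fix x ∈ ℝ^N. Then the function z ↦ [ |u(x)−u(x+z)|^{p−2}(u(x)−u(x+z)) + |u(x)−u(x−z)|^{p−2}(u(x)−u(x−z)) ] / |z|^{N+sp} is absolutely integrable on ℝ^N, provided additionally s < 2(p−1)/p when p ∈ (1,2). -/

import Mathlib

/-!
Write `φ(t) = |t|^(p-2) t`, `A = u x - u (x + z)` and `B = u x - u (x - z)`. Since `φ` is odd, the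
numerator is `φ A - φ (-B)`, and `A - (-B)` is minus the second difference
`u (x + z) + u (x - z) - 2 u x`, which is `O(‖z‖²)` because `∇u` is Lipschitz. Near the origin,
the local Lipschitz bound on `φ` (for `p ≥ 2`, using `|A|, |B| = O(‖z‖)`) or its
`(p-1)`-Hölder bound (for `p < 2`) makes the numerator `O(‖z‖^p)`, resp. `O(‖z‖^(2(p-1)))`, which
beats the singularity `‖z‖^(-(N+sp))` since `sp < p`, resp. `sp < 2(p-1)`. Away from the origin
the numerator is bounded and `‖z‖^(-(N+sp))` is integrable since `sp > 0`.
-/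

open MeasureTheory Metric Set
open scoped NNReal

lemma abs_sub_le_two_mul_of_odd {f g : ℝ → ℝ} {M : ℝ} (hf_odd : ∀ t, f (-t) = -f t)
    (hf : Monotone f) (hg : MonotoneOn g (Ici 0))
    (hfg : ∀ a c, 0 ≤ c → c ≤ a → a ≤ M → f a - f c ≤ g (a - c))
    {a c : ℝ} (ha : |a| ≤ M) (hc : |c| ≤ M) : |f a - f c| ≤ 2 * g |a - c| := by
  wlog hca : c ≤ a generalizing a c
  · rw [abs_sub_comm, abs_sub_comm a]
    exact this hc ha (le_of_not_ge hca)
  rw [abs_of_nonneg (sub_nonneg.2 (hf hca)), abs_of_nonneg (sub_nonneg.2 hca)]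
  have hf0 : f 0 = 0 := by linarith [neg_zero (G := ℝ) ▸ hf_odd 0]
  have hac : ∀ t, 0 ≤ t → t ≤ a - c → g t ≤ g (a - c) := fun t ht hta =>
    hg ht (ht.trans hta) hta
  have hg0 : 0 ≤ g (a - c) := by
    have := hfg 0 0 le_rfl le_rfl ((abs_nonneg a).trans ha)
    rw [sub_self, sub_self] at this
    exact this.trans (hac 0 le_rfl (sub_nonneg.2 hca))
  rcases le_total 0 c with hc0 | hc0
  · linarith [hfg a c hc0 hca ((le_abs_self a).trans ha)]
  rcases le_total a 0 with ha0 | ha0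
  · have := hfg (-c) (-a) (by linarith) (by linarith) ((neg_le_abs c).trans hc)
    rw [hf_odd, hf_odd, show -c - -a = a - c by ring] at this
    linarith
  -- an increment straddling `0` is split there
  · have h1 := hfg a 0 le_rfl ha0 ((le_abs_self a).trans ha)
    have h2 := hfg (-c) 0 le_rfl (by linarith) ((neg_le_abs c).trans hc)
    simp only [hf_odd, hf0, sub_zero] at h1 h2
    linarith [hac a ha0 (by linarith), hac (-c) (by linarith) (by linarith)]

lemma rpow_sub_rpow_le_mul_sub {q a c M : ℝ} (hq : 1 ≤ q) (hc : 0 ≤ c) (hca : c ≤ a)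
    (haM : a ≤ M) : a ^ q - c ^ q ≤ q * M ^ (q - 1) * (a - c) := by
  refine (convex_Icc 0 M).image_sub_le_mul_sub_of_deriv_le
    (Real.continuous_rpow_const (by linarith)).continuousOn ?_ ?_ c ⟨hc, hca.trans haM⟩
    a ⟨hc.trans hca, haM⟩ hca
  · rw [interior_Icc]
    exact fun t ht => (Real.differentiableAt_rpow_const_of_ne q ht.1.ne').differentiableWithinAt
  · rw [interior_Icc]
    intro t ht
    rw [Real.deriv_rpow_const]
    gcongr
    · exact ht.1.le
    · exact ht.2.le

lemma rpow_sub_rpow_le_rpow_sub {q a c : ℝ} (hq0 : 0 ≤ q) (hq1 : q ≤ 1) (hc : 0 ≤ c)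
    (hca : c ≤ a) : a ^ q - c ^ q ≤ (a - c) ^ q := by
  have := Real.rpow_add_le_add_rpow (sub_nonneg.2 hca) hc hq0 hq1
  rw [sub_add_cancel] at this
  linarith

noncomputable def signedPow (p t : ℝ) : ℝ := |t| ^ (p - 2) * t

section signedPow

variable {p : ℝ}

lemma signedPow_neg (p t : ℝ) : signedPow p (-t) = -signedPow p t := by
  simp [signedPow]

lemma signedPow_of_nonneg (hp : p ≠ 1) {t : ℝ} (ht : 0 ≤ t) : signedPow p t = t ^ (p - 1) := by
  rcases ht.eq_or_lt with rfl | ht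
  · simp [signedPow, Real.zero_rpow (sub_ne_zero.2 hp)]
  · rw [signedPow, abs_of_pos ht, ← Real.rpow_add_one ht.ne']
    ring_nf

lemma abs_signedPow (hp : p ≠ 1) (t : ℝ) : |signedPow p t| = |t| ^ (p - 1) := by
  rw [← signedPow_of_nonneg hp (abs_nonneg t), signedPow, signedPow, abs_mul, abs_abs,
    abs_of_nonneg (Real.rpow_nonneg (abs_nonneg t) _)]

lemma monotone_signedPow (hp : 1 < p) : Monotone (signedPow p) := by
  refine monotone_of_odd_of_monotoneOn_nonneg (signedPow_neg p) fun a ha c hc hac => ?_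
  rw [signedPow_of_nonneg hp.ne' ha, signedPow_of_nonneg hp.ne' hc]
  exact Real.rpow_le_rpow ha hac (by linarith)

@[fun_prop]
lemma measurable_signedPow (p : ℝ) : Measurable (signedPow p) := by
  unfold signedPow
  fun_prop

lemma abs_signedPow_sub_le_of_two_le (hp : 2 ≤ p) {M a c : ℝ} (ha : |a| ≤ M) (hc : |c| ≤ M) :
    |signedPow p a - signedPow p c| ≤ 2 * ((p - 1) * M ^ (p - 2) * |a - c|) := by
  have hp1 : p ≠ 1 := by linarith
  have hM : 0 ≤ M := (abs_nonneg a).trans ha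
  refine abs_sub_le_two_mul_of_odd (signedPow_neg p) (monotone_signedPow (by linarith))
    (fun t₁ _ t₂ _ h => by gcongr; exact mul_nonneg (by linarith) (by positivity))
    (fun a c hc hca haM => ?_) ha hc
  rw [signedPow_of_nonneg hp1 hc, signedPow_of_nonneg hp1 (hc.trans hca)]
  simpa [show p - 1 - 1 = p - 2 by ring] using
    rpow_sub_rpow_le_mul_sub (q := p - 1) (by linarith) hc hca haM

lemma abs_signedPow_sub_le_of_le_two (hp₁ : 1 < p) (hp₂ : p ≤ 2) (a c : ℝ) :
    |signedPow p a - signedPow p c| ≤ 2 * |a - c| ^ (p - 1) := by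
  refine abs_sub_le_two_mul_of_odd (M := max |a| |c|) (signedPow_neg p) (monotone_signedPow hp₁)
    (fun t₁ ht₁ t₂ _ h => Real.rpow_le_rpow ht₁ h (by linarith))
    (fun a c hc hca _ => ?_) (le_max_left _ _) (le_max_right _ _)
  rw [signedPow_of_nonneg hp₁.ne' hc, signedPow_of_nonneg hp₁.ne' (hc.trans hca)]
  exact rpow_sub_rpow_le_rpow_sub (by linarith) (by linarith) hc hca

lemma abs_signedPow_add_le_of_two_le (hp : 2 ≤ p) {A B L Q ρ : ℝ} (hL : 0 ≤ L) (hρ : 0 ≤ ρ)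
    (hA : |A| ≤ L * ρ) (hB : |B| ≤ L * ρ) (hAB : |A + B| ≤ Q * ρ ^ 2) :
    |signedPow p A + signedPow p B| ≤ 2 * (p - 1) * L ^ (p - 2) * Q * ρ ^ p := by
  have hρp : ρ ^ (p - 2) * ρ ^ 2 = ρ ^ p := by
    rw [← Real.rpow_natCast, ← Real.rpow_add' hρ (by push_cast; linarith)]
    norm_num
  calc |signedPow p A + signedPow p B| = |signedPow p A - signedPow p (-B)| := by
        rw [signedPow_neg, sub_neg_eq_add]
    _ ≤ 2 * ((p - 1) * (L * ρ) ^ (p - 2) * |A - -B|) :=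
        abs_signedPow_sub_le_of_two_le hp hA (by rwa [abs_neg])
    _ ≤ 2 * ((p - 1) * (L * ρ) ^ (p - 2) * (Q * ρ ^ 2)) := by
        rw [sub_neg_eq_add]
        gcongr
        exact mul_nonneg (by linarith) (by positivity)
    _ = 2 * (p - 1) * L ^ (p - 2) * Q * ρ ^ p := by
        rw [Real.mul_rpow hL hρ, ← hρp]
        ring

lemma abs_signedPow_add_le_of_le_two (hp₁ : 1 < p) (hp₂ : p ≤ 2) {A B Q ρ : ℝ} (hQ : 0 ≤ Q)
    (hρ : 0 ≤ ρ) (hAB : |A + B| ≤ Q * ρ ^ 2) :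
    |signedPow p A + signedPow p B| ≤ 2 * Q ^ (p - 1) * ρ ^ (2 * (p - 1)) := by
  calc |signedPow p A + signedPow p B| = |signedPow p A - signedPow p (-B)| := by
        rw [signedPow_neg, sub_neg_eq_add]
    _ ≤ 2 * |A + B| ^ (p - 1) := by
        rw [← sub_neg_eq_add A B]
        exact abs_signedPow_sub_le_of_le_two hp₁ hp₂ A (-B)
    _ ≤ 2 * (Q * ρ ^ 2) ^ (p - 1) := by
        gcongr
    _ = 2 * Q ^ (p - 1) * ρ ^ (2 * (p - 1)) := by
        rw [Real.mul_rpow hQ (by positivity), ← Real.rpow_natCast, ← Real.rpow_mul hρ]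
        push_cast
        ring

lemma abs_signedPow_add_le (hp : 1 < p) {A B L : ℝ} (hA : |A| ≤ L) (hB : |B| ≤ L) :
    |signedPow p A + signedPow p B| ≤ 2 * L ^ (p - 1) := by
  have hL : ∀ {t : ℝ}, |t| ≤ L → |signedPow p t| ≤ L ^ (p - 1) := fun ht => by
    rw [abs_signedPow hp.ne']
    exact Real.rpow_le_rpow (abs_nonneg _) ht (by linarith)
  linarith [abs_add_le (signedPow p A) (signedPow p B), hL hA, hL hB]

end signedPow

section Taylor

variable {E F : Type*} [NormedAddCommGroup E] [NormedSpace ℝ E] [NormedAddCommGroup F]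
  [NormedSpace ℝ F] {f : E → F} {K : ℝ≥0}

lemma norm_image_add_sub_sub_fderiv_le (hf : Differentiable ℝ f)
    (hK : LipschitzWith K (fderiv ℝ f)) (x z : E) :
    ‖f (x + z) - f x - fderiv ℝ f x z‖ ≤ K * ‖z‖ ^ 2 := by
  have hbound : ∀ w ∈ closedBall x ‖z‖, ‖fderiv ℝ f w - fderiv ℝ f x‖ ≤ K * ‖z‖ :=
    fun w hw => by
      rw [← dist_eq_norm]
      exact (hK.dist_le_mul w x).trans (by gcongr; exact hw)
  have h := (convex_closedBall x ‖z‖).norm_image_sub_le_of_norm_hasFDerivWithin_le'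
    (fun w _ => (hf w).hasFDerivAt.hasFDerivWithinAt) hbound
    (mem_closedBall_self (norm_nonneg z)) (y := x + z) (by simp)
  rwa [add_sub_cancel_left, mul_assoc, ← sq] at h

lemma norm_second_difference_le (hf : Differentiable ℝ f) (hK : LipschitzWith K (fderiv ℝ f))
    (x z : E) : ‖(f x - f (x + z)) + (f x - f (x - z))‖ ≤ 2 * K * ‖z‖ ^ 2 := by
  have h₁ := norm_image_add_sub_sub_fderiv_le hf hK x z
  have h₂ := norm_image_add_sub_sub_fderiv_le hf hK x (-z)
  rw [← sub_eq_add_neg, map_neg, sub_neg_eq_add, norm_neg] at h₂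
  calc ‖(f x - f (x + z)) + (f x - f (x - z))‖
      = ‖(f (x + z) - f x - fderiv ℝ f x z) + (f (x - z) - f x + fderiv ℝ f x z)‖ := by
        rw [← norm_neg]
        congr 1
        abel
    _ ≤ 2 * K * ‖z‖ ^ 2 := by
        linarith [norm_add_le (f (x + z) - f x - fderiv ℝ f x z)
          (f (x - z) - f x + fderiv ℝ f x z)]

end Taylor

section Gradient

variable {F : Type*} [NormedAddCommGroup F] [InnerProductSpace ℝ F] [CompleteSpace F]
  {u : F → ℝ}

lemma norm_fderiv_eq_norm_gradient (u : F → ℝ) (x : F) : ‖fderiv ℝ u x‖ = ‖gradient u x‖ := by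
  rw [← toDual_gradient, LinearIsometryEquiv.norm_map]

lemma lipschitzWith_fderiv_of_gradient {K : ℝ≥0} (hK : LipschitzWith K (gradient u)) :
    LipschitzWith K (fderiv ℝ u) := by
  rw [← toDual_comp_gradient]
  simpa using (InnerProductSpace.toDual ℝ F).lipschitz.comp hK

lemma abs_sub_le_of_norm_gradient_le (hu : Differentiable ℝ u) {M : ℝ}
    (hM : ∀ y, ‖gradient u y‖ ≤ M) (x y : F) : |u x - u y| ≤ M * ‖x - y‖ :=
  convex_univ.norm_image_sub_le_of_norm_fderiv_le (fun w _ => hu w)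
    (fun w _ => (norm_fderiv_eq_norm_gradient u w).trans_le (hM w)) (mem_univ y) (mem_univ x)

end Gradient

section RadialPower

variable {E : Type*} [NormedAddCommGroup E] [NormedSpace ℝ E] [FiniteDimensional ℝ E]
  [MeasurableSpace E] [BorelSpace E] (μ : Measure E) [μ.IsAddHaarMeasure]

lemma integrableOn_ball_rpow_norm [Nontrivial E] {t : ℝ}
    (ht : -(Module.finrank ℝ E : ℝ) < t) : IntegrableOn (fun z : E => ‖z‖ ^ t) (ball 0 1) μ := by
  have hd : ((Module.finrank ℝ E - 1 : ℕ) : ℝ) = Module.finrank ℝ E - 1 :=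
    Nat.cast_pred Module.finrank_pos
  rw [integrableOn_fun_norm_addHaar μ (f := fun y => y ^ t)]
  have hpow : -1 < t + (Module.finrank ℝ E - 1 : ℕ) := by linarith
  refine ((intervalIntegral.integrableOn_Ioo_rpow_iff one_pos).2 hpow).congr_fun
    (fun y hy => ?_) measurableSet_Ioo
  dsimp only
  rw [Real.rpow_add hy.1, Real.rpow_natCast, mul_comm, smul_eq_mul]

lemma integrableOn_compl_ball_rpow_norm {r : ℝ} (hr : (Module.finrank ℝ E : ℝ) < r) :
    IntegrableOn (fun z : E => ‖z‖ ^ (-r)) (ball 0 1)ᶜ μ := by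
  refine ((integrable_one_add_norm hr).const_mul (2 ^ r)).integrableOn.mono'
    (by fun_prop : Measurable fun z : E => ‖z‖ ^ (-r)).aestronglyMeasurable ?_
  filter_upwards [ae_restrict_mem measurableSet_ball.compl] with z hz
  have hz : 1 ≤ ‖z‖ := by simpa using hz
  rw [Real.norm_of_nonneg (by positivity)]
  calc ‖z‖ ^ (-r) = 2 ^ r * (2 * ‖z‖) ^ (-r) := by
        rw [Real.mul_rpow zero_le_two (norm_nonneg z), ← mul_assoc, ← Real.rpow_add two_pos]
        simp
    _ ≤ 2 ^ r * (1 + ‖z‖) ^ (-r) := by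
        have hr₀ : 0 < r := (Nat.cast_nonneg _).trans_lt hr
        exact mul_le_mul_of_nonneg_left
          (Real.rpow_le_rpow_of_nonpos (by positivity) (by linarith) (by linarith)) (by positivity)

lemma integrable_div_rpow_norm [Nontrivial E] {F : E → ℝ} {r β C₀ C₁ : ℝ}
    (hF : AEStronglyMeasurable F μ) (hr : (Module.finrank ℝ E : ℝ) < r)
    (hβ : r - Module.finrank ℝ E < β) (h₀ : ∀ z, ‖z‖ < 1 → |F z| ≤ C₀ * ‖z‖ ^ β)
    (h₁ : ∀ z, 1 ≤ ‖z‖ → |F z| ≤ C₁) : Integrable (fun z => F z / ‖z‖ ^ r) μ := by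
  have hm : AEStronglyMeasurable (fun z => F z / ‖z‖ ^ r) μ :=
    hF.div₀ (by fun_prop : Measurable fun z : E => ‖z‖ ^ r).aestronglyMeasurable
  have hne : ∀ᵐ z ∂μ, z ≠ 0 := compl_mem_ae_iff.2 (measure_singleton 0)
  rw [← integrableOn_univ, ← union_compl_self (ball (0 : E) 1)]
  refine IntegrableOn.union ?_ ?_
  · refine ((integrableOn_ball_rpow_norm μ (t := β - r) (by linarith)).const_mul C₀).mono'
      hm.restrict ?_
    filter_upwards [ae_restrict_mem measurableSet_ball, ae_restrict_of_ae hne] with z hz hz₀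
    have hz : ‖z‖ < 1 := by simpa using hz
    have hpos : 0 < ‖z‖ := norm_pos_iff.2 hz₀
    rw [Real.norm_eq_abs, abs_div, abs_of_pos (Real.rpow_pos_of_pos hpos r),
      Real.rpow_sub hpos, ← mul_div_assoc]
    gcongr
    exact h₀ z hz
  · refine ((integrableOn_compl_ball_rpow_norm μ hr).const_mul C₁).mono' hm.restrict ?_
    filter_upwards [ae_restrict_mem measurableSet_ball.compl] with z hz
    have hz : 1 ≤ ‖z‖ := by simpa using hz
    have hpos : 0 < ‖z‖ := one_pos.trans_le hz
    rw [Real.norm_eq_abs, abs_div, abs_of_pos (Real.rpow_pos_of_pos hpos r),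
      Real.rpow_neg hpos.le, ← div_eq_mul_inv]
    gcongr
    exact h₁ z hz

end RadialPower

/-- Absolute integrability on `ℝ^N` of the symmetrized fractional `p`-Laplacian
integrand for `u ∈ C^{1,1}(ℝ^N)` (assuming in addition `s < 2(p-1)/p` when `p < 2`). -/
theorem symmetrized_integrand_integrable
    (N : ℕ) (hN : 1 ≤ N) (s p : ℝ) (hs : s ∈ Set.Ioo (0 : ℝ) 1) (hp : 1 < p)
    (hsp : p < 2 → s < 2 * (p - 1) / p)
    (u : EuclideanSpace ℝ (Fin N) → ℝ)
    (hu : ContDiff ℝ 1 u)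
    (Mu : ℝ) (hMu : ∀ x, |u x| ≤ Mu)
    (Mg : ℝ) (hMg : ∀ x, ‖gradient u x‖ ≤ Mg)
    (K : NNReal) (hK : LipschitzWith K (gradient u))
    (x : EuclideanSpace ℝ (Fin N)) :
    Integrable
      (fun z : EuclideanSpace ℝ (Fin N) =>
        (|u x - u (x + z)| ^ (p - 2) * (u x - u (x + z)) +
            |u x - u (x - z)| ^ (p - 2) * (u x - u (x - z))) / ‖z‖ ^ ((N : ℝ) + s * p))
      volume := by
  obtain ⟨hs₀, hs₁⟩ := hs
  have : Nontrivial (EuclideanSpace ℝ (Fin N)) :=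
    Module.nontrivial_of_finrank_pos (by rw [finrank_euclideanSpace_fin]; omega)
  have hdiff : Differentiable ℝ u := hu.differentiable one_ne_zero
  have hfirst : ∀ y, |u x - u y| ≤ Mg * ‖x - y‖ := abs_sub_le_of_norm_gradient_le hdiff hMg x
  have hsecond : ∀ z, |(u x - u (x + z)) + (u x - u (x - z))| ≤ 2 * K * ‖z‖ ^ 2 :=
    norm_second_difference_le hdiff (lipschitzWith_fderiv_of_gradient hK) x
  have hosc : ∀ y, |u x - u y| ≤ 2 * Mu := fun y => by
    linarith [abs_sub (u x) (u y), hMu x, hMu y]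
  obtain ⟨β, C₀, hβ, hnear⟩ : ∃ β C₀, s * p < β ∧ ∀ z : EuclideanSpace ℝ (Fin N),
      |signedPow p (u x - u (x + z)) + signedPow p (u x - u (x - z))| ≤ C₀ * ‖z‖ ^ β := by
    rcases le_or_gt 2 p with hp₂ | hp₂
    · refine ⟨p, _, by nlinarith, fun z => abs_signedPow_add_le_of_two_le hp₂
        ((norm_nonneg _).trans (hMg x)) (norm_nonneg z) ?_ ?_ (hsecond z)⟩
      · simpa using hfirst (x + z)
      · simpa using hfirst (x - z)
    · refine ⟨2 * (p - 1), _, ?_, fun z =>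
        abs_signedPow_add_le_of_le_two hp hp₂.le (by positivity) (norm_nonneg z) (hsecond z)⟩
      linarith [(lt_div_iff₀ (by linarith)).1 (hsp hp₂)]
  have hmeas : Measurable fun z =>
      signedPow p (u x - u (x + z)) + signedPow p (u x - u (x - z)) := by
    have := hu.continuous
    fun_prop
  exact integrable_div_rpow_norm volume hmeas.aestronglyMeasurable
    (by rw [finrank_euclideanSpace_fin]; nlinarith)
    (by rw [finrank_euclideanSpace_fin]; linarith) (fun z _ => hnear z)
    (fun z _ => abs_signedPow_add_le hp (hosc _) (hosc _))
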